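/- arXiv:1210.0086 — 3 statements merged into one kernel-verified Lean document; each statement's English description precedes it below -/
import Mathlib

section
/- With α_k, β_k, γ defined as before, the function ρ(ζ_{t_1},...,ζ_{t_K},ζ_d) = γ(ζ_d)·Σ_{k=1}^K α_k(ζ_{t_k}) / (1 + γ(ζ_d)·Σ_{k=1}^K β_k(ζ_{t_k})) is strictly positive, and is strictly decreasing in each ζ_{t_k} and in ζ_d (holding the other variables fixed), over the nonnegative orthant. -/
open Set

noncomputable section

/-- `γ(ζ_d)` -/
def gammaFun (Pw T Td ζd : ℝ) : ℝ := 1 / (1 + ζd * Pw * T / Td)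

/-- `α_k(ζ)` -/
def alphaFun (Pw T Tt Pt Pd ζ : ℝ) : ℝ :=
  (Pd * Pt * Tt / (1 + ζ * Pw * T / Tt)) / (1 + Pt * Tt / (1 + ζ * Pw * T / Tt))

/-- `β_k(ζ)` -/
def betaFun (Pw T Tt Pt Pd ζ : ℝ) : ℝ :=
  Pd / (1 + Pt * Tt / (1 + ζ * Pw * T / Tt))

/-- The effective SINR `ρ`. -/
def rhoFun (K : ℕ) (Pw T Td : ℝ) (Tt Pt Pd : Fin K → ℝ)
    (ζt : Fin K → ℝ) (ζd : ℝ) : ℝ :=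
  gammaFun Pw T Td ζd * (∑ k, alphaFun Pw T (Tt k) (Pt k) (Pd k) (ζt k))
    / (1 + gammaFun Pw T Td ζd * ∑ k, betaFun Pw T (Tt k) (Pt k) (Pd k) (ζt k))

/-! With `u = 1 + ζ P_w T / T_t` one has `β_k = P_d / (1 + P_t T_t / u)` and `α_k + β_k = P_d`,
so `β_k` is strictly increasing and `α_k` strictly decreasing in `ζ_{t_k}`. Writing `A = Σ α_k`
and `B = Σ β_k`, `ρ = γ A / (1 + γ B)` increases with `A`, decreases with `B` and, as `A > 0` and
`B ≥ 0`, strictly increases with `γ`, which strictly decreases in `ζ_d`. -/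

section RhoShape

variable {g a a' b b' : ℝ}

theorem mul_div_one_add_mul_lt_of_lt_of_le (hg : 0 < g) (ha : 0 ≤ a) (haa' : a < a')
    (hb' : 0 ≤ b') (hbb' : b' ≤ b) :
    g * a / (1 + g * b) < g * a' / (1 + g * b') := by
  have hden : 0 < 1 + g * b' := by positivity
  calc g * a / (1 + g * b) ≤ g * a / (1 + g * b') := by gcongr
    _ < g * a' / (1 + g * b') := by gcongr

theorem strictMonoOn_mul_div_one_add_mul (ha : 0 < a) (hb : 0 ≤ b) :
    StrictMonoOn (fun g => g * a / (1 + g * b)) (Ici 0) := by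
  intro g hg g' hg' hgg'
  simp only [mem_Ici] at hg hg'
  rw [div_lt_div_iff₀ (by positivity) (by positivity)]
  nlinarith [mul_lt_mul_of_pos_right hgg' ha]

end RhoShape

theorem Finset.sum_apply_update {ι α M : Type*} [Fintype ι] [DecidableEq ι] [AddCommMonoid M]
    (f : ι → α → M) (ζ : ι → α) (k : ι) (z : α) :
    ∑ j, f j (Function.update ζ k z j) = f k z + ∑ j ∈ univ \ {k}, f j (ζ j) := by
  simp_rw [Function.apply_update f]
  exact Finset.sum_update_of_mem (mem_univ k) _ _

section JammingFactors

variable {Pw T Td Tt Pt Pd : ℝ}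

theorem gammaFun_pos (hPw : 0 ≤ Pw) (hT : 0 ≤ T) (hTd : 0 ≤ Td) {ζd : ℝ} (hζd : 0 ≤ ζd) :
    0 < gammaFun Pw T Td ζd := by
  unfold gammaFun; positivity

theorem strictAntiOn_gammaFun (hPw : 0 < Pw) (hT : 0 < T) (hTd : 0 < Td) :
    StrictAntiOn (gammaFun Pw T Td) (Ici 0) := by
  intro x hx y _ hxy
  simp only [mem_Ici] at hx
  unfold gammaFun
  gcongr

theorem alphaFun_pos (hPw : 0 ≤ Pw) (hT : 0 ≤ T) (hTt : 0 < Tt) (hPt : 0 < Pt) (hPd : 0 < Pd)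
    {ζ : ℝ} (hζ : 0 ≤ ζ) : 0 < alphaFun Pw T Tt Pt Pd ζ := by
  unfold alphaFun; positivity

theorem betaFun_nonneg (hPw : 0 ≤ Pw) (hT : 0 ≤ T) (hTt : 0 ≤ Tt) (hPt : 0 ≤ Pt) (hPd : 0 ≤ Pd)
    {ζ : ℝ} (hζ : 0 ≤ ζ) : 0 ≤ betaFun Pw T Tt Pt Pd ζ := by
  unfold betaFun; positivity

theorem alphaFun_add_betaFun (hPw : 0 ≤ Pw) (hT : 0 ≤ T) (hTt : 0 ≤ Tt) (hPt : 0 ≤ Pt)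
    {ζ : ℝ} (hζ : 0 ≤ ζ) : alphaFun Pw T Tt Pt Pd ζ + betaFun Pw T Tt Pt Pd ζ = Pd := by
  have hX : 0 < 1 + Pt * Tt / (1 + ζ * Pw * T / Tt) := by positivity
  unfold alphaFun betaFun
  field_simp
  ring

theorem strictMonoOn_betaFun (hPw : 0 < Pw) (hT : 0 < T) (hTt : 0 < Tt) (hPt : 0 < Pt)
    (hPd : 0 < Pd) : StrictMonoOn (betaFun Pw T Tt Pt Pd) (Ici 0) := by
  intro x hx y hy hxy
  simp only [mem_Ici] at hx hy
  unfold betaFun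
  gcongr

theorem strictAntiOn_alphaFun (hPw : 0 < Pw) (hT : 0 < T) (hTt : 0 < Tt) (hPt : 0 < Pt)
    (hPd : 0 < Pd) : StrictAntiOn (alphaFun Pw T Tt Pt Pd) (Ici 0) := by
  intro x hx y hy hxy
  have hβ := strictMonoOn_betaFun hPw hT hTt hPt hPd hx hy hxy
  have hsx := alphaFun_add_betaFun (Pd := Pd) hPw.le hT.le hTt.le hPt.le hx
  have hsy := alphaFun_add_betaFun (Pd := Pd) hPw.le hT.le hTt.le hPt.le hy
  linarith

end JammingFactors

section Rho

variable {K : ℕ} {Pw T Td : ℝ} {Tt Pt Pd : Fin K → ℝ}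

theorem sum_alphaFun_pos (hPw : 0 < Pw) (hT : 0 < T)
    (hTt : ∀ k, 0 < Tt k) (hPt : ∀ k, 0 < Pt k) (hPd : ∀ k, 0 < Pd k)
    (hK : 0 < K) {ζt : Fin K → ℝ} (hζt : ∀ k, 0 ≤ ζt k) :
    0 < ∑ k, alphaFun Pw T (Tt k) (Pt k) (Pd k) (ζt k) := by
  have : NeZero K := ⟨hK.ne'⟩
  exact Finset.sum_pos (fun k _ => alphaFun_pos hPw.le hT.le (hTt k) (hPt k) (hPd k) (hζt k))
    Finset.univ_nonempty

theorem sum_betaFun_nonneg (hPw : 0 < Pw) (hT : 0 < T)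
    (hTt : ∀ k, 0 < Tt k) (hPt : ∀ k, 0 < Pt k) (hPd : ∀ k, 0 < Pd k)
    {ζt : Fin K → ℝ} (hζt : ∀ k, 0 ≤ ζt k) :
    0 ≤ ∑ k, betaFun Pw T (Tt k) (Pt k) (Pd k) (ζt k) :=
  Finset.sum_nonneg fun k _ =>
    betaFun_nonneg hPw.le hT.le (hTt k).le (hPt k).le (hPd k).le (hζt k)

theorem rhoFun_pos (hPw : 0 < Pw) (hT : 0 < T) (hTd : 0 < Td)
    (hTt : ∀ k, 0 < Tt k) (hPt : ∀ k, 0 < Pt k) (hPd : ∀ k, 0 < Pd k)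
    (hK : 0 < K) {ζt : Fin K → ℝ} {ζd : ℝ} (hζt : ∀ k, 0 ≤ ζt k)
    (hζd : 0 ≤ ζd) : 0 < rhoFun K Pw T Td Tt Pt Pd ζt ζd := by
  have hγ := gammaFun_pos hPw.le hT.le hTd.le hζd
  have hA := sum_alphaFun_pos hPw hT hTt hPt hPd hK hζt
  have hB := sum_betaFun_nonneg hPw hT hTt hPt hPd hζt
  unfold rhoFun
  positivity

theorem strictAntiOn_rhoFun_update (hPw : 0 < Pw) (hT : 0 < T) (hTd : 0 < Td)
    (hTt : ∀ k, 0 < Tt k) (hPt : ∀ k, 0 < Pt k) (hPd : ∀ k, 0 < Pd k)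
    (hK : 0 < K) {ζt : Fin K → ℝ} {ζd : ℝ}
    (hζt : ∀ k, 0 ≤ ζt k) (hζd : 0 ≤ ζd) (k : Fin K) :
    StrictAntiOn (fun z => rhoFun K Pw T Td Tt Pt Pd (Function.update ζt k z) ζd) (Ici 0) := by
  intro x hx y hy hxy
  have hζy : ∀ j, 0 ≤ Function.update ζt k y j :=
    (Function.forall_update_iff ζt (p := fun _ z => 0 ≤ z)).2 ⟨hy, fun j _ => hζt j⟩
  have hζx : ∀ j, 0 ≤ Function.update ζt k x j :=
    (Function.forall_update_iff ζt (p := fun _ z => 0 ≤ z)).2 ⟨hx, fun j _ => hζt j⟩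
  have hA : ∑ j, alphaFun Pw T (Tt j) (Pt j) (Pd j) (Function.update ζt k y j)
      < ∑ j, alphaFun Pw T (Tt j) (Pt j) (Pd j) (Function.update ζt k x j) := by
    rw [Finset.sum_apply_update (fun j => alphaFun Pw T (Tt j) (Pt j) (Pd j)),
      Finset.sum_apply_update (fun j => alphaFun Pw T (Tt j) (Pt j) (Pd j))]
    exact add_lt_add_left (strictAntiOn_alphaFun hPw hT (hTt k) (hPt k) (hPd k) hx hy hxy) _
  have hB : ∑ j, betaFun Pw T (Tt j) (Pt j) (Pd j) (Function.update ζt k x j)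
      ≤ ∑ j, betaFun Pw T (Tt j) (Pt j) (Pd j) (Function.update ζt k y j) := by
    rw [Finset.sum_apply_update (fun j => betaFun Pw T (Tt j) (Pt j) (Pd j)),
      Finset.sum_apply_update (fun j => betaFun Pw T (Tt j) (Pt j) (Pd j))]
    exact add_le_add_left (strictMonoOn_betaFun hPw hT (hTt k) (hPt k) (hPd k) hx hy hxy).le _
  exact mul_div_one_add_mul_lt_of_lt_of_le (gammaFun_pos hPw.le hT.le hTd.le hζd)
    (sum_alphaFun_pos hPw hT hTt hPt hPd hK hζy).le hA
    (sum_betaFun_nonneg hPw hT hTt hPt hPd hζx) hB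

theorem strictAntiOn_rhoFun (hPw : 0 < Pw) (hT : 0 < T) (hTd : 0 < Td)
    (hTt : ∀ k, 0 < Tt k) (hPt : ∀ k, 0 < Pt k) (hPd : ∀ k, 0 < Pd k)
    (hK : 0 < K) {ζt : Fin K → ℝ} (hζt : ∀ k, 0 ≤ ζt k) :
    StrictAntiOn (rhoFun K Pw T Td Tt Pt Pd ζt) (Ici 0) :=
  (strictMonoOn_mul_div_one_add_mul (sum_alphaFun_pos hPw hT hTt hPt hPd hK hζt)
    (sum_betaFun_nonneg hPw hT hTt hPt hPd hζt)).comp_strictAntiOn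
    (strictAntiOn_gammaFun hPw hT hTd) fun _ hζd => (gammaFun_pos hPw.le hT.le hTd.le hζd).le

end Rho

/-- `ρ` is strictly positive on the nonnegative orthant and strictly decreasing
in each training-jamming variable `ζ_{t_k}` and in the data-jamming variable
`ζ_d`. -/
theorem rho_pos_and_strictAnti (K : ℕ) (hK : 0 < K) (Pw T Td : ℝ)
    (Tt Pt Pd : Fin K → ℝ)
    (hPw : 0 < Pw) (hT : 0 < T) (hTd : 0 < Td)
    (hTt : ∀ k, 0 < Tt k) (hPt : ∀ k, 0 < Pt k) (hPd : ∀ k, 0 < Pd k) :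
    (∀ (ζt : Fin K → ℝ) (ζd : ℝ), (∀ k, 0 ≤ ζt k) → 0 ≤ ζd →
      0 < rhoFun K Pw T Td Tt Pt Pd ζt ζd) ∧
    (∀ (ζt : Fin K → ℝ) (ζd : ℝ), (∀ k, 0 ≤ ζt k) → 0 ≤ ζd →
      ∀ k : Fin K,
        StrictAntiOn (fun z : ℝ =>
          rhoFun K Pw T Td Tt Pt Pd (Function.update ζt k z) ζd) (Ici 0)) ∧
    (∀ ζt : Fin K → ℝ, (∀ k, 0 ≤ ζt k) →
      StrictAntiOn (fun z : ℝ => rhoFun K Pw T Td Tt Pt Pd ζt z) (Ici 0)) :=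
  ⟨fun _ _ hζt hζd => rhoFun_pos hPw hT hTd hTt hPt hPd hK hζt hζd,
    fun _ _ hζt hζd => strictAntiOn_rhoFun_update hPw hT hTd hTt hPt hPd hK hζt hζd,
    fun _ hζt => strictAntiOn_rhoFun hPw hT hTd hTt hPt hPd hK hζt⟩
end
end

section
/- For a single user (K=1), the function ζ ↦ α(ζ) = (P_d P_t T_t/(1 + ζ P_w T/T_t)) / (1 + P_t T_t/(1 + ζ P_w T/T_t)) is convex on [0, ∞). -/
/-!
Clearing the inner fraction `u = 1 + ζ Pw T / Tt` gives
`α(ζ) = Pd Pt Tt / (u + Pt Tt)`, a nonnegative multiple of the reciprocal of an affine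
function of `ζ` that stays positive on `[0, ∞)`; such a function is convex because `x ↦ 1 / x`
is convex on `(0, ∞)`.
-/

open Set

theorem div_div_one_add_div {𝕜 : Type*} [Field 𝕜] {a b u : 𝕜} (hu : u ≠ 0) :
    a / u / (1 + b / u) = a / (u + b) := by
  rw [one_add_div hu, div_div_div_cancel_right₀ hu]

theorem convexOn_div_mul_add {a c d : ℝ} (ha : 0 ≤ a) :
    ConvexOn ℝ {x | 0 < c * x + d} fun x => a / (c * x + d) := by
  have hdiv : ConvexOn ℝ (Ioi 0) fun x : ℝ => a / x := by
    simpa [div_eq_mul_inv] using (convexOn_zpow (𝕜 := ℝ) (-1)).smul ha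
  exact hdiv.comp_affineMap (c • AffineMap.id ℝ ℝ + AffineMap.const ℝ ℝ d)

/-- Convexity of the single-user `α` function on `[0, ∞)`. -/
theorem alpha_convexOn (Pd Pt Tt Pw T : ℝ)
    (hPd : 0 < Pd) (hPt : 0 < Pt) (hTt : 0 < Tt) (hPw : 0 < Pw) (hT : 0 < T) :
    ConvexOn ℝ (Ici 0) (fun ζ : ℝ =>
      (Pd * Pt * Tt / (1 + ζ * Pw * T / Tt))
        / (1 + Pt * Tt / (1 + ζ * Pw * T / Tt))) := by
  have hpos : Ici 0 ⊆ {ζ : ℝ | 0 < Pw * T / Tt * ζ + (1 + Pt * Tt)} :=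
    fun ζ (hζ : 0 ≤ ζ) => show 0 < Pw * T / Tt * ζ + (1 + Pt * Tt) by positivity
  have hconv := (convexOn_div_mul_add (a := Pd * Pt * Tt) (by positivity)).subset hpos
    (convex_Ici 0)
  refine hconv.congr fun ζ (hζ : 0 ≤ ζ) => ?_
  have hu : 1 + ζ * Pw * T / Tt ≠ 0 := by positivity
  rw [div_div_one_add_div hu]
  ring
end

section
/- Let ζ_d ↦ γ(ζ_d) = 1/(1 + ζ_d P_w T/T_d) and fix A ≥ 0, B ≥ 0 (representing Σ_k α_k and Σ_k β_k). Then the map ζ_d ↦ γ(ζ_d)A/(1 + γ(ζ_d)B) is convex and nonincreasing on [0, ∞). -/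
open Set

/-- With the training allocations fixed (so `A = ∑ α_k ≥ 0`, `B = ∑ β_k ≥ 0`),
the map `ζ_d ↦ γ(ζ_d)A/(1 + γ(ζ_d)B)` is convex and nonincreasing on `[0,∞)`. -/
theorem rho_in_zetad_convex_antitone (Pw T Td A B : ℝ)
    (hPw : 0 < Pw) (hT : 0 < T) (hTd : 0 < Td) (hA : 0 ≤ A) (hB : 0 ≤ B) :
    ConvexOn ℝ (Ici 0) (fun ζd : ℝ =>
      (1 / (1 + ζd * Pw * T / Td)) * A / (1 + (1 / (1 + ζd * Pw * T / Td)) * B)) ∧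
    AntitoneOn (fun ζd : ℝ =>
      (1 / (1 + ζd * Pw * T / Td)) * A / (1 + (1 / (1 + ζd * Pw * T / Td)) * B))
      (Ici 0) := by
  set c : ℝ := Pw * T / Td with hc
  have hcpos : 0 < c := by positivity
  have hden : ∀ x : ℝ, x ∈ Ici (0:ℝ) → 0 < 1 + x * Pw * T / Td := by
    intro x hx
    have : 0 ≤ x * Pw * T / Td := by
      have hx0 : (0:ℝ) ≤ x := hx
      positivity
    linarith
  have hden2 : ∀ x : ℝ, x ∈ Ici (0:ℝ) → 0 < 1 + B + c * x := by
    intro x hx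
    have hx0 : (0:ℝ) ≤ x := hx
    nlinarith
  have heq : EqOn (fun ζd : ℝ =>
      (1 / (1 + ζd * Pw * T / Td)) * A / (1 + (1 / (1 + ζd * Pw * T / Td)) * B))
      (fun ζd : ℝ => A / (1 + B + c * ζd)) (Ici 0) := by
    intro x hx
    have h1 := hden x hx
    have h2 := hden2 x hx
    simp only
    rw [hc] at h2 ⊢
    have hx0 : (0:ℝ) ≤ x := hx
    have h3 : Td + x * Pw * T ≠ 0 := by positivity
    field_simp
    ring
  constructor
  · refine ConvexOn.congr ?_ heq.symm
    have hinv : ConvexOn ℝ (Ioi (0:ℝ)) fun x : ℝ => x⁻¹ := by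
      have h := (strictConvexOn_zpow (m := -1) (by norm_num) (by norm_num)).convexOn
      simpa using h
    have haff : ConvexOn ℝ (Ici (0:ℝ)) fun x : ℝ => (1 + B + c * x)⁻¹ := by
      have h := hinv.comp_affineMap (AffineMap.const ℝ ℝ (1 + B) + c • AffineMap.id ℝ ℝ)
      refine (h.subset ?_ (convex_Ici 0)).congr ?_
      · intro x hx
        simpa using hden2 x hx
      · intro x hx; simp
    have h2 := haff.smul hA
    refine h2.congr ?_
    intro x hx
    simp [div_eq_mul_inv, mul_comm]
  · refine AntitoneOn.congr ?_ heq.symm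
    intro x hx y hy hxy
    have h2x := hden2 x hx
    have h2y := hden2 y hy
    have hle : 1 + B + c * x ≤ 1 + B + c * y := by nlinarith
    exact div_le_div_of_nonneg_left hA h2x hle
end
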